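/- arXiv:1303.5307 — 3 statements merged into one kernel-verified Lean document; each statement's English description precedes it below -/
import Mathlib

section
/- Let γ ∈ (−1, 0) and set c(γ) = ∫₀^∞ ξ^γ (1/ξ − 1/(e^ξ − 1)) dξ. Then for all real b > 0 and k > 0, the function x ↦ x^γ (1/(e^{bx} − 1) − k/(e^{kbx} − 1)) is Lebesgue integrable on (0, ∞) and ∫₀^∞ x^γ (1/(e^{bx} − 1) − k/(e^{kbx} − 1)) dx = b^{−(γ+1)} · c(γ) · (k^{−γ} − 1). -/
/-!
Write `g ξ = 1/ξ - 1/(e^ξ - 1)`. Since `k g(kbx) - g(bx) = 1/(e^{bx} - 1) - k/(e^{kbx} - 1)`,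
the integrand is `x^γ (k g(kbx) - g(bx))`, and both terms are integrable because
`0 ≤ g ≤ min 1 (1/ξ)` and `-1 < γ < 0`. The substitution `ξ = a x` turns
`∫ x^γ g(a x) dx` into `a^{-(γ+1)} c(γ)`, so the integral is
`((kb)^{-(γ+1)} k - b^{-(γ+1)}) c(γ) = b^{-(γ+1)} c(γ) (k^{-γ} - 1)`.
-/

open MeasureTheory Set Real

noncomputable def boseRemainder (ξ : ℝ) : ℝ := 1 / ξ - 1 / (exp ξ - 1)

lemma lt_exp_sub_one {ξ : ℝ} (hξ : 0 < ξ) : ξ < exp ξ - 1 := by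
  linarith [add_one_lt_exp hξ.ne']

lemma boseRemainder_nonneg {ξ : ℝ} (hξ : 0 < ξ) : 0 ≤ boseRemainder ξ :=
  sub_nonneg.mpr (one_div_le_one_div_of_le hξ (lt_exp_sub_one hξ).le)

lemma boseRemainder_le_one {ξ : ℝ} (hξ : 0 < ξ) : boseRemainder ξ ≤ 1 := by
  have hpos : 0 < exp ξ - 1 := hξ.trans (lt_exp_sub_one hξ)
  have hexp : exp ξ * (1 - ξ) ≤ 1 := by
    calc exp ξ * (1 - ξ) ≤ exp ξ * exp (-ξ) := by
          gcongr; linarith [add_one_le_exp (-ξ)]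
      _ = 1 := by rw [← exp_add, add_neg_cancel, exp_zero]
  rw [boseRemainder, div_sub_div _ _ hξ.ne' hpos.ne', div_le_one (by positivity)]
  nlinarith

lemma boseRemainder_le_inv {ξ : ℝ} (hξ : 0 < ξ) : boseRemainder ξ ≤ 1 / ξ := by
  have : 0 ≤ 1 / (exp ξ - 1) := one_div_nonneg.mpr (hξ.trans (lt_exp_sub_one hξ)).le
  rw [boseRemainder]
  linarith

lemma continuousOn_boseRemainder : ContinuousOn boseRemainder (Ioi 0) := by
  refine (continuousOn_const.div continuousOn_id fun x hx => ne_of_gt hx).sub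
    (continuousOn_const.div (continuous_exp.continuousOn.sub continuousOn_const) fun x hx => ?_)
  exact (lt_trans hx (lt_exp_sub_one hx)).ne'

lemma integrableOn_rpow_mul_boseRemainder {γ : ℝ} (hγ₁ : -1 < γ) (hγ₀ : γ < 0) :
    IntegrableOn (fun ξ => ξ ^ γ * boseRemainder ξ) (Ioi 0) := by
  have hmeas : AEStronglyMeasurable (fun ξ => ξ ^ γ * boseRemainder ξ)
      (volume.restrict (Ioi 0)) :=
    ((continuousOn_id.rpow_const fun x hx => Or.inl (ne_of_gt hx)).mul
      continuousOn_boseRemainder).aestronglyMeasurable measurableSet_Ioi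
  have hnorm : ∀ ξ : ℝ, 0 < ξ → ‖ξ ^ γ * boseRemainder ξ‖ = ξ ^ γ * boseRemainder ξ :=
    fun ξ hξ => Real.norm_of_nonneg (mul_nonneg (by positivity) (boseRemainder_nonneg hξ))
  have hnear : IntegrableOn (fun ξ => ξ ^ γ * boseRemainder ξ) (Ioc 0 1) := by
    have hdom : IntegrableOn (fun ξ : ℝ => ξ ^ γ) (Ioc 0 1) := by
      rw [integrableOn_Ioc_iff_integrableOn_Ioo]
      exact (intervalIntegral.integrableOn_Ioo_rpow_iff zero_lt_one).mpr hγ₁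
    refine hdom.mono' (hmeas.mono_set Ioc_subset_Ioi_self) ?_
    filter_upwards [ae_restrict_mem measurableSet_Ioc] with ξ hξ
    rw [hnorm ξ hξ.1]
    exact mul_le_of_le_one_right (rpow_nonneg hξ.1.le γ) (boseRemainder_le_one hξ.1)
  have hfar : IntegrableOn (fun ξ => ξ ^ γ * boseRemainder ξ) (Ioi 1) := by
    have hdom : IntegrableOn (fun ξ : ℝ => ξ ^ (γ - 1)) (Ioi 1) :=
      (integrableOn_Ioi_rpow_iff zero_lt_one).mpr (by linarith)
    refine hdom.mono' (hmeas.mono_set (Ioi_subset_Ioi zero_le_one)) ?_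
    filter_upwards [ae_restrict_mem measurableSet_Ioi] with ξ hξ
    have hξ₀ : (0 : ℝ) < ξ := zero_lt_one.trans hξ
    rw [hnorm ξ hξ₀, rpow_sub_one hξ₀.ne', div_eq_mul_one_div]
    exact mul_le_mul_of_nonneg_left (boseRemainder_le_inv hξ₀) (by positivity)
  rw [← Ioc_union_Ioi_eq_Ioi zero_le_one]
  exact hnear.union hfar

lemma one_div_exp_sub_one_sub_eq {u k : ℝ} (hu : u ≠ 0) (hk : k ≠ 0) :
    1 / (exp u - 1) - k / (exp (k * u) - 1) = k * boseRemainder (k * u) - boseRemainder u := by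
  simp only [boseRemainder]
  field_simp
  ring

section Scaling

variable {f : ℝ → ℝ} {γ a : ℝ}

lemma rpow_mul_comp_mul_left_eq (ha : 0 < a) {x : ℝ} (hx : 0 < x) :
    x ^ γ * f (a * x) = (a ^ γ)⁻¹ * ((a * x) ^ γ * f (a * x)) := by
  rw [mul_rpow ha.le hx.le, mul_assoc, inv_mul_cancel_left₀ (by positivity)]

lemma integrableOn_rpow_mul_comp_mul_left
    (hf : IntegrableOn (fun x => x ^ γ * f x) (Ioi 0)) (ha : 0 < a) :
    IntegrableOn (fun x => x ^ γ * f (a * x)) (Ioi 0) := by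
  have hscaled : IntegrableOn (fun x => (a * x) ^ γ * f (a * x)) (Ioi 0) := by
    rwa [integrableOn_Ioi_comp_mul_left_iff (fun x => x ^ γ * f x) 0 ha, mul_zero]
  exact IntegrableOn.congr_fun (hscaled.const_mul _)
    (fun x hx => (rpow_mul_comp_mul_left_eq ha hx).symm) measurableSet_Ioi

lemma integral_Ioi_rpow_mul_comp_mul_left (f : ℝ → ℝ) (γ : ℝ) (ha : 0 < a) :
    ∫ x in Ioi 0, x ^ γ * f (a * x) = a ^ (-(γ + 1)) * ∫ x in Ioi 0, x ^ γ * f x := by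
  rw [setIntegral_congr_fun measurableSet_Ioi fun x hx => rpow_mul_comp_mul_left_eq ha hx,
    integral_const_mul, integral_comp_mul_left_Ioi (fun x => x ^ γ * f x) 0 ha, mul_zero,
    smul_eq_mul, ← mul_assoc, ← mul_inv, ← rpow_add_one ha.ne', rpow_neg ha.le]

end Scaling

/-- For `γ ∈ (−1, 0)`, `b > 0`, `k > 0`, the function
`x ↦ x^γ (1/(e^{bx} − 1) − k/(e^{kbx} − 1))` is Lebesgue integrable on `(0, ∞)` and
its integral equals `b^{−(γ+1)} c(γ) (k^{−γ} − 1)`, where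
`c(γ) = ∫₀^∞ ξ^γ (1/ξ − 1/(e^ξ − 1)) dξ`. -/
theorem integral_rpow_bose_difference (γ : ℝ) (hγ : γ ∈ Set.Ioo (-1 : ℝ) 0)
    (b k : ℝ) (hb : 0 < b) (hk : 0 < k) :
    IntegrableOn
      (fun x : ℝ => x ^ γ *
        (1 / (Real.exp (b * x) - 1) - k / (Real.exp (k * b * x) - 1)))
      (Ioi 0) ∧
    ∫ x in Ioi (0 : ℝ),
        x ^ γ * (1 / (Real.exp (b * x) - 1) - k / (Real.exp (k * b * x) - 1)) =
      b ^ (-(γ + 1)) *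
        (∫ ξ in Ioi (0 : ℝ), ξ ^ γ * (1 / ξ - 1 / (Real.exp ξ - 1))) *
        (k ^ (-γ) - 1) := by
  have hkb : 0 < k * b := mul_pos hk hb
  have hc := integrableOn_rpow_mul_boseRemainder hγ.1 hγ.2
  have hIk := (integrableOn_rpow_mul_comp_mul_left hc hkb).const_mul k
  have hIb := integrableOn_rpow_mul_comp_mul_left hc hb
  have hsplit : EqOn
      (fun x : ℝ => x ^ γ * (1 / (exp (b * x) - 1) - k / (exp (k * b * x) - 1)))
      (fun x => k * (x ^ γ * boseRemainder (k * b * x)) - x ^ γ * boseRemainder (b * x))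
      (Ioi 0) := fun x hx => by
    simp only [mul_assoc k b x, one_div_exp_sub_one_sub_eq (mul_pos hb hx).ne' hk.ne']
    ring
  refine ⟨IntegrableOn.congr_fun (hIk.sub hIb) hsplit.symm measurableSet_Ioi, ?_⟩
  rw [setIntegral_congr_fun measurableSet_Ioi hsplit, integral_sub hIk hIb, integral_const_mul,
    integral_Ioi_rpow_mul_comp_mul_left _ γ hkb, integral_Ioi_rpow_mul_comp_mul_left _ γ hb,
    mul_rpow hk.le hb.le, rpow_neg hk.le, rpow_add_one hk.ne', rpow_neg hk.le]
  simp only [boseRemainder]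
  field_simp
end

section
/- Let ψ : ℝ → ℝ be continuously differentiable with ∫_{−∞}^{∞} ψ(x)² dx = 1, and suppose that the functions x²ψ(x)² and ψ′(x)² are Lebesgue integrable on ℝ and that x·ψ(x)² → 0 as x → ±∞. Then (∫_{−∞}^{∞} x² ψ(x)² dx) · (∫_{−∞}^{∞} ψ′(x)² dx) ≥ 1/4. Equivalently, for any ε > 0, writing (Δx)² = ∫ x²ψ² dx and |ΔD|² = ε² ∫ (ψ′)² dx, one has √((Δx)² · |ΔD|²) ≥ ε/2. -/
open MeasureTheory Filter Real

/-!
Integrating by parts, `∫ x ψ ψ' = ½ ∫ x (ψ²)' = -½ ∫ ψ² = -½`, the boundary terms vanishing because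
`x ψ(x)² → 0` at `±∞`. Cauchy–Schwarz for `x ψ` and `ψ'` in `L²`, proved by expanding
`0 ≤ ∫ (a x ψ + ψ')²` and requiring the discriminant of this quadratic in `a` to be `≤ 0`,
then gives `1/4 ≤ (∫ x² ψ²)(∫ ψ'²)`.
-/

theorem sq_integral_mul_le_integral_sq_mul_integral_sq {α : Type*} [MeasurableSpace α]
    {μ : Measure α} {f g : α → ℝ} (hf : MemLp f 2 μ) (hg : MemLp g 2 μ) :
    (∫ x, f x * g x ∂μ) ^ 2 ≤ (∫ x, f x ^ 2 ∂μ) * ∫ x, g x ^ 2 ∂μ := by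
  have hfg : Integrable (fun x => f x * g x) μ := hf.integrable_mul hg
  have hnonneg : ∀ a : ℝ, 0 ≤ (∫ x, f x ^ 2 ∂μ) * (a * a) + 2 * (∫ x, f x * g x ∂μ) * a +
      ∫ x, g x ^ 2 ∂μ := by
    intro a
    have hexpand : ∫ x, (a * f x + g x) ^ 2 ∂μ = (∫ x, f x ^ 2 ∂μ) * (a * a) +
        2 * (∫ x, f x * g x ∂μ) * a + ∫ x, g x ^ 2 ∂μ := by
      have hsq : (fun x => (a * f x + g x) ^ 2) =
          fun x => (a * a) * f x ^ 2 + (2 * a) * (f x * g x) + g x ^ 2 := by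
        funext x; ring
      have hsum : Integrable (fun x => (a * a) * f x ^ 2 + (2 * a) * (f x * g x)) μ :=
        (hf.integrable_sq.const_mul _).add (hfg.const_mul _)
      rw [hsq, integral_add hsum hg.integrable_sq,
        integral_add (hf.integrable_sq.const_mul _) (hfg.const_mul _), integral_const_mul,
        integral_const_mul]
      ring
    exact hexpand ▸ integral_nonneg fun _ => sq_nonneg _
  have hdiscrim := discrim_le_zero hnonneg
  rw [discrim] at hdiscrim
  nlinarith

theorem integral_mul_mul_deriv_eq_neg_half_integral_sq {ψ : ℝ → ℝ} (hψ : Differentiable ℝ ψ)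
    (hψ2 : Integrable fun x => ψ x ^ 2) (hI : Integrable fun x => x * ψ x * deriv ψ x)
    (hbot : Tendsto (fun x : ℝ => x * ψ x ^ 2) atBot (nhds 0))
    (htop : Tendsto (fun x : ℝ => x * ψ x ^ 2) atTop (nhds 0)) :
    ∫ x, x * ψ x * deriv ψ x = -(∫ x, ψ x ^ 2) / 2 := by
  have hparts := integral_mul_deriv_eq_deriv_mul (u := id) (u' := fun _ => 1)
    (v := fun x => ψ x ^ 2) (v' := fun x => 2 * (ψ x * deriv ψ x))
    (fun x _ => hasDerivAt_id x)
    (fun x _ => ((hψ x).hasDerivAt.pow 2).congr_deriv (by simp only [Nat.cast_ofNat]; ring))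
    ((hI.const_mul 2).congr (.of_forall fun x => by simp only [Pi.mul_apply, id]; ring))
    (by simpa only [Pi.mul_def, one_mul] using hψ2)
    hbot htop
  simp only [id, one_mul, sub_self, zero_sub, mul_left_comm _ (2 : ℝ), integral_const_mul]
    at hparts
  simp only [mul_assoc]
  linarith

/-- Uncertainty principle: if `ψ` is `C¹` with `∫ ψ² = 1`, `x²ψ²` and `(ψ′)²` integrable,
and `x ψ(x)² → 0` as `x → ±∞`, then `(∫ x²ψ²)(∫ (ψ′)²) ≥ 1/4`; equivalently, for any
`ε > 0`, `√((Δx)² |ΔD|²) ≥ ε/2` with `(Δx)² = ∫ x²ψ²` and `|ΔD|² = ε² ∫ (ψ′)²`. -/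
theorem uncertainty_principle (ψ : ℝ → ℝ) (hψ : ContDiff ℝ 1 ψ)
    (hnorm : ∫ x : ℝ, ψ x ^ 2 = 1)
    (hx2 : Integrable fun x : ℝ => x ^ 2 * ψ x ^ 2)
    (hd : Integrable fun x : ℝ => (deriv ψ x) ^ 2)
    (htop : Tendsto (fun x : ℝ => x * ψ x ^ 2) atTop (nhds 0))
    (hbot : Tendsto (fun x : ℝ => x * ψ x ^ 2) atBot (nhds 0)) :
    (∫ x : ℝ, x ^ 2 * ψ x ^ 2) * (∫ x : ℝ, (deriv ψ x) ^ 2) ≥ 1 / 4 ∧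
    ∀ ε : ℝ, 0 < ε →
      Real.sqrt ((∫ x : ℝ, x ^ 2 * ψ x ^ 2) * (ε ^ 2 * ∫ x : ℝ, (deriv ψ x) ^ 2)) ≥
        ε / 2 := by
  have hψd : Differentiable ℝ ψ := hψ.differentiable one_ne_zero
  have hψ2 : Integrable fun x => ψ x ^ 2 := .of_integral_ne_zero (by simp [hnorm])
  have hxψ : MemLp (fun x => x * ψ x) 2 := by
    refine (memLp_two_iff_integrable_sq ?_).2 ?_
    · exact (continuous_id.mul hψd.continuous).aestronglyMeasurable
    · simpa only [mul_pow] using hx2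
  have hψ' : MemLp (deriv ψ) 2 := (memLp_two_iff_integrable_sq (by fun_prop)).2 hd
  have hparts : ∫ x, x * ψ x * deriv ψ x = -1 / 2 := by
    rw [integral_mul_mul_deriv_eq_neg_half_integral_sq hψd hψ2 (hxψ.integrable_mul hψ') hbot htop,
      hnorm]
  have hAB : 1 / 4 ≤ (∫ x : ℝ, x ^ 2 * ψ x ^ 2) * ∫ x : ℝ, (deriv ψ x) ^ 2 := by
    have hCS := sq_integral_mul_le_integral_sq_mul_integral_sq hxψ hψ'
    norm_num only [hparts, mul_pow] at hCS
    exact hCS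
  refine ⟨hAB, fun ε hε => ?_⟩
  rw [ge_iff_le, Real.le_sqrt (by positivity) (by positivity)]
  calc (ε / 2) ^ 2 = ε ^ 2 * (1 / 4) := by ring
    _ ≤ ε ^ 2 * ((∫ x : ℝ, x ^ 2 * ψ x ^ 2) * ∫ x : ℝ, (deriv ψ x) ^ 2) := by gcongr
    _ = _ := by ring
end

section
/- For every real s > 0 and every x with 0 < x < 1, the function t ↦ t^{s−1}/(x^{−1} e^t − 1) is Lebesgue integrable on (0, ∞) and ∫₀^∞ t^{s−1}/(x^{−1} e^t − 1) dt = Γ(s) · ∑_{n=1}^∞ x^n / n^s, where the series on the right converges absolutely. -/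
open MeasureTheory Set Real

/-!
Since `x e^{-t} < 1` for `t > 0`, the kernel `(x⁻¹ e^t - 1)⁻¹` is the geometric series
`∑ xⁿ⁺¹ e^{-(n+1)t}`. Integrating termwise against `t^{s-1}` is the Mellin-transform-equals-
Dirichlet-series principle (`hasSum_mellin`), and the `n`-th term contributes
`Γ(s) xⁿ⁺¹ / (n+1)^s`. Integrability follows from the bound `(x⁻¹ e^t - 1)⁻¹ ≤ x/(1-x) e^{-t}`,
which dominates the integrand by a multiple of the Gamma integrand.
-/

lemma hasSum_pow_succ_mul_exp_neg_mul {x t : ℝ} (hx : 0 < x) (hxt : x < exp t) :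
    HasSum (fun n : ℕ => x ^ (n + 1) * exp (-(n + 1) * t)) (x⁻¹ * exp t - 1)⁻¹ := by
  have hy1 : x / exp t < 1 := (div_lt_one (exp_pos t)).mpr hxt
  have hterm (n : ℕ) : x ^ (n + 1) * exp (-(n + 1) * t) = x / exp t * (x / exp t) ^ n := by
    rw [← pow_succ', div_pow, ← exp_nat_mul]
    push_cast
    rw [neg_mul, exp_neg, div_eq_mul_inv]
  have hsum : (x⁻¹ * exp t - 1)⁻¹ = x / exp t * (1 - x / exp t)⁻¹ := by
    field_simp
  simp_rw [hterm, hsum]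
  exact (hasSum_geometric_of_lt_one (by positivity) hy1).mul_left _

lemma inv_mul_exp_sub_one_inv_le {x t : ℝ} (hx0 : 0 < x) (hx1 : x < 1) (ht : 0 ≤ t) :
    (x⁻¹ * exp t - 1)⁻¹ ≤ x / (1 - x) * exp (-t) := by
  have h1x : 0 < 1 - x := sub_pos.mpr hx1
  have hlow : (1 - x) / x * exp t ≤ x⁻¹ * exp t - 1 := by
    have : (1 - x) / x * exp t = x⁻¹ * exp t - exp t := by field_simp
    linarith [one_le_exp ht]
  calc (x⁻¹ * exp t - 1)⁻¹ ≤ ((1 - x) / x * exp t)⁻¹ := inv_anti₀ (by positivity) hlow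
    _ = x / (1 - x) * exp (-t) := by rw [mul_inv, inv_div, exp_neg]

lemma integrableOn_rpow_div_inv_mul_exp_sub_one {s x : ℝ} (hs : 0 < s) (hx0 : 0 < x)
    (hx1 : x < 1) :
    IntegrableOn (fun t : ℝ => t ^ (s - 1) / (x⁻¹ * exp t - 1)) (Ioi 0) := by
  refine ((GammaIntegral_convergent hs).const_mul (x / (1 - x))).mono'
    (by fun_prop : Measurable _).aestronglyMeasurable ?_
  filter_upwards [ae_restrict_mem measurableSet_Ioi] with t (ht : 0 < t)
  have hden : 0 < x⁻¹ * exp t - 1 := by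
    rw [sub_pos, ← div_eq_inv_mul, one_lt_div hx0]
    exact hx1.trans (one_lt_exp_iff.mpr ht)
  rw [norm_of_nonneg (by positivity)]
  calc t ^ (s - 1) / (x⁻¹ * exp t - 1) = t ^ (s - 1) * (x⁻¹ * exp t - 1)⁻¹ := div_eq_mul_inv _ _
    _ ≤ t ^ (s - 1) * (x / (1 - x) * exp (-t)) := by
      gcongr
      exact inv_mul_exp_sub_one_inv_le hx0 hx1 ht.le
    _ = x / (1 - x) * (exp (-t) * t ^ (s - 1)) := by ring

lemma summable_abs_pow_succ_div_rpow {x s : ℝ} (hx : |x| < 1) (hs : 0 ≤ s) :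
    Summable fun n : ℕ => |x ^ (n + 1) / ((n : ℝ) + 1) ^ s| := by
  refine .of_nonneg_of_le (fun _ => abs_nonneg _) (fun n => ?_)
    ((summable_geometric_of_lt_one (abs_nonneg x) hx).mul_left |x|)
  have hn : 1 ≤ ((n : ℝ) + 1) ^ s := one_le_rpow (by simp) hs
  rw [abs_div, abs_pow, ← pow_succ', abs_of_pos (by positivity : (0 : ℝ) < ((n : ℝ) + 1) ^ s)]
  exact div_le_self (by positivity) hn

lemma mellin_ofReal (f : ℝ → ℝ) (s : ℝ) :
    mellin (fun t => (f t : ℂ)) s = ((∫ t in Ioi 0, t ^ (s - 1) * f t : ℝ) : ℂ) := by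
  rw [mellin, ← integral_complex_ofReal]
  refine setIntegral_congr_fun measurableSet_Ioi fun t ht => ?_
  rw [smul_eq_mul, Complex.ofReal_mul, Complex.ofReal_cpow (le_of_lt ht), Complex.ofReal_sub,
    Complex.ofReal_one]

lemma hasSum_integral_rpow_mul_of_hasSum_exp_neg_mul {ι : Type*} [Countable ι] {a p : ι → ℝ}
    {F : ℝ → ℝ} {s : ℝ} (hp : ∀ i, a i = 0 ∨ 0 < p i) (hs : 0 < s)
    (hF : ∀ t ∈ Ioi 0, HasSum (fun i => a i * exp (-p i * t)) (F t))
    (h_sum : Summable fun i => |a i| / p i ^ s) :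
    HasSum (fun i => Gamma s * a i / p i ^ s) (∫ t in Ioi 0, t ^ (s - 1) * F t) := by
  have h := hasSum_mellin (a := fun i => (a i : ℂ)) (F := fun t => (F t : ℂ)) (s := s)
    (by simpa using hp) (by simpa using hs)
    (fun t ht => by exact_mod_cast Complex.hasSum_ofReal.mpr (hF t ht)) (by simpa using h_sum)
  rw [mellin_ofReal] at h
  rw [← Complex.hasSum_ofReal]
  convert h using 2 with i
  rcases hp i with hai | hpi
  · simp [hai]
  · push_cast
    rw [Complex.ofReal_cpow hpi.le, Complex.Gamma_ofReal]

/-- Bose-type integral representation of the polylogarithm: for `s > 0` and `0 < x < 1`,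
`t ↦ t^{s−1}/(x⁻¹ e^t − 1)` is Lebesgue integrable on `(0, ∞)` and
`∫₀^∞ t^{s−1}/(x⁻¹ e^t − 1) dt = Γ(s) ∑_{n≥1} xⁿ/n^s`, the series converging
absolutely. -/
theorem integral_polylog_repr (s x : ℝ) (hs : 0 < s) (hx0 : 0 < x) (hx1 : x < 1) :
    IntegrableOn (fun t : ℝ => t ^ (s - 1) / (x⁻¹ * Real.exp t - 1)) (Ioi 0) ∧
    Summable (fun n : ℕ => |x ^ (n + 1) / ((n : ℝ) + 1) ^ s|) ∧
    ∫ t in Ioi (0 : ℝ), t ^ (s - 1) / (x⁻¹ * Real.exp t - 1) =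
      Real.Gamma s * ∑' n : ℕ, x ^ (n + 1) / ((n : ℝ) + 1) ^ s := by
  have hsum := summable_abs_pow_succ_div_rpow (abs_lt.mpr ⟨by linarith, hx1⟩) hs.le
  refine ⟨integrableOn_rpow_div_inv_mul_exp_sub_one hs hx0 hx1, hsum, ?_⟩
  have hmellin := hasSum_integral_rpow_mul_of_hasSum_exp_neg_mul (a := fun n : ℕ => x ^ (n + 1))
    (p := fun n => (n : ℝ) + 1) (fun n => Or.inr n.cast_add_one_pos) hs
    (fun t ht => hasSum_pow_succ_mul_exp_neg_mul hx0 (hx1.trans (one_lt_exp_iff.mpr ht)))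
    (hsum.congr fun n => by rw [abs_div, abs_of_pos (by positivity : (0 : ℝ) < (n + 1) ^ s)])
  simp_rw [div_eq_mul_inv (_ ^ (s - 1)), hmellin.tsum_eq.symm, ← tsum_mul_left, mul_div_assoc]
end
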